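/- Sufficient condition for PM-simulability via maximal eigenvalues: let M = (M_1,...,M_n) be a POVM on ℂ^d and let λ_i^max be the largest eigenvalue of M_i. If for some index k, ∑_{i≠k} λ_i^max ≤ 1, then M is a convex combination of two-outcome POVMs (hence PM-simulable): M = δ(I,0,...,0) + ∑_{i≠k} λ_i^max N_i, where δ = 1 - ∑_{i≠k} λ_i^max and N_i is the two-outcome POVM with effect M_i/λ_i^max at outcome i and I - M_i/λ_i^max at outcome k. -/

import Mathlib

open scoped ComplexOrder

/-- An `n`-outcome POVM on `ℂ^d`. -/
def IsPOVM {d n : ℕ} (M : Fin n → Matrix (Fin d) (Fin d) ℂ) : Prop :=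
  (∀ i, (M i).PosSemidef) ∧ ∑ i, M i = 1

/-- A projective measurement: a POVM whose effects are orthogonal projections. -/
def IsProjectivePOVM {d n : ℕ} (M : Fin n → Matrix (Fin d) (Fin d) ℂ) : Prop :=
  IsPOVM M ∧ ∀ i, (M i).IsHermitian ∧ M i * M i = M i

/-- `n`-outcome POVMs with at most two nonzero effects (two-outcome POVMs). -/
def TwoOutcome (d n : ℕ) : Set (Fin n → Matrix (Fin d) (Fin d) ℂ) :=
  {N | IsPOVM N ∧ ∃ a b : Fin n, ∀ j, j ≠ a → j ≠ b → N j = 0}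

/-!
With `δ = 1 - ∑_{i ≠ k} λ_i`, the POVM is the convex combination `δ N_k + ∑_{i ≠ k} λ_i N_i`, where
`N_i` has effect `λ_i⁻¹ M_i` at outcome `i` and `1 - λ_i⁻¹ M_i` at outcome `k` (for `i = k` this is
the trivial POVM with effect `1` at `k`); `0 ≤ M_i ≤ λ_i` makes each `N_i` a POVM, and the effects at
`k` add up to `1 - ∑_{i ≠ k} M_i = M_k`. A two-outcome POVM `(E, 1 - E)` is in turn a convex
combination of projective ones: diagonalising `E`, its eigenvalue vector lies in the cube
`[0,1]^d`, the convex hull of `{0,1}^d`.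
-/

open scoped MatrixOrder

section Matrix

variable {𝕜 m : Type*} [RCLike 𝕜] [DecidableEq m]

lemma Matrix.nonneg_of_nonneg_smul_one [Nonempty m] {r : ℝ}
    (h : 0 ≤ r • (1 : Matrix m m 𝕜)) : 0 ≤ r := by
  obtain ⟨i⟩ := ‹Nonempty m›
  simpa [RCLike.real_smul_eq_coe_mul] using
    (Matrix.nonneg_iff_posSemidef.1 h).diag_nonneg (i := i)

variable [Fintype m]

lemma Matrix.inv_smul_le_one {A : Matrix m m 𝕜} {r : ℝ} (hr : 0 ≤ r) (h : A ≤ r • 1) :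
    r⁻¹ • A ≤ 1 := by
  rcases hr.eq_or_lt with rfl | hr
  · simp
  · exact (inv_smul_le_iff_of_pos hr).2 h

lemma Matrix.isStarProjection_diagonal_ofReal {s : m → ℝ} (hs : ∀ j, s j = 0 ∨ s j = 1) :
    IsStarProjection (Matrix.diagonal (RCLike.ofReal ∘ s : m → 𝕜)) := by
  refine ⟨?_, ?_⟩
  · rw [IsIdempotentElem, Matrix.diagonal_mul_diagonal]
    congr 1
    funext j
    rcases hs j with h | h <;> simp [h]
  · rw [IsSelfAdjoint, Matrix.star_eq_conjTranspose, Matrix.diagonal_conjTranspose]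
    congr 1
    funext j
    simp

lemma Matrix.mem_convexHull_isStarProjection {E : Matrix m m 𝕜} (h0 : 0 ≤ E) (h1 : E ≤ 1) :
    E ∈ convexHull ℝ {P | IsStarProjection P} := by
  have hE : E.IsHermitian := (Matrix.nonneg_iff_posSemidef.1 h0).isHermitian
  set f : (m → ℝ) → Matrix m m 𝕜 := fun s =>
    Unitary.conjStarAlgAut 𝕜 _ hE.eigenvectorUnitary (Matrix.diagonal (RCLike.ofReal ∘ s))
  have hf : IsLinearMap ℝ f := by
    constructor
    · intro s t
      simp only [f, ← map_add]
      congr 1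
      ext i j
      by_cases hij : i = j <;> simp [hij]
    · intro c s
      rw [RCLike.real_smul_eq_coe_smul (K := 𝕜) c (f s)]
      simp only [f, ← map_smul]
      congr 1
      ext i j
      by_cases hij : i = j <;> simp [hij]
  have ht : hE.eigenvalues ∈ convexHull ℝ (Set.univ.pi fun _ => {0, 1}) := by
    refine mem_convexHull_pi fun j _ => ?_
    rw [convexHull_pair, segment_eq_Icc zero_le_one]
    exact ⟨(Matrix.nonneg_iff_posSemidef.1 h0).eigenvalues_nonneg j,
      (CFC.le_one_iff E hE.isSelfAdjoint).1 h1 _ (hE.eigenvalues_mem_spectrum_real j)⟩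
  have hproj : f '' Set.univ.pi (fun _ => {0, 1}) ⊆ {P | IsStarProjection P} := by
    rintro _ ⟨s, hs, rfl⟩
    exact (Matrix.isStarProjection_diagonal_ofReal fun j => hs j trivial).map _
  rw [hE.spectral_theorem]
  exact convexHull_mono hproj (hf.image_convexHull _ ▸ Set.mem_image_of_mem f ht)

end Matrix

section POVM

variable {d n : ℕ}

lemma isPOVM_iff {M : Fin n → Matrix (Fin d) (Fin d) ℂ} : IsPOVM M ↔ 0 ≤ M ∧ ∑ i, M i = 1 := by
  simp only [IsPOVM, Pi.le_def, Pi.zero_apply, Matrix.nonneg_iff_posSemidef]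

lemma isProjectivePOVM_iff {M : Fin n → Matrix (Fin d) (Fin d) ℂ} :
    IsProjectivePOVM M ↔ (∀ i, IsStarProjection (M i)) ∧ ∑ i, M i = 1 := by
  simp only [IsProjectivePOVM, IsPOVM, isStarProjection_iff, IsIdempotentElem,
    Matrix.isHermitian_iff_isSelfAdjoint]
  refine ⟨fun ⟨⟨_, hsum⟩, hP⟩ => ⟨fun i => ⟨(hP i).2, (hP i).1⟩, hsum⟩,
    fun ⟨hP, hsum⟩ => ⟨⟨fun i => ?_, hsum⟩, fun i => ⟨(hP i).2, (hP i).1⟩⟩⟩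
  exact Matrix.nonneg_iff_posSemidef.1 (IsStarProjection.nonneg ⟨(hP i).1, (hP i).2⟩)

noncomputable def twoOutcomePOVM (a b : Fin n) :
    Matrix (Fin d) (Fin d) ℂ →ᵃ[ℝ] Fin n → Matrix (Fin d) (Fin d) ℂ where
  toFun E := Pi.single a E + Pi.single b (1 - E)
  linear := LinearMap.single ℝ (fun _ => Matrix (Fin d) (Fin d) ℂ) a -
    LinearMap.single ℝ (fun _ => Matrix (Fin d) (Fin d) ℂ) b
  map_vadd' E F := by
    simp only [vadd_eq_add, LinearMap.sub_apply, LinearMap.coe_single, Pi.single_add,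
      Pi.single_sub]
    abel

lemma twoOutcomePOVM_apply (a b : Fin n) (E : Matrix (Fin d) (Fin d) ℂ) :
    twoOutcomePOVM a b E = Pi.single a E + Pi.single b (1 - E) := by
  rfl

lemma sum_twoOutcomePOVM (a b : Fin n) (E : Matrix (Fin d) (Fin d) ℂ) :
    ∑ j, twoOutcomePOVM a b E j = 1 := by
  simp [twoOutcomePOVM_apply, Finset.sum_add_distrib]

lemma twoOutcomePOVM_mem_twoOutcome (a b : Fin n) {E : Matrix (Fin d) (Fin d) ℂ} (h0 : 0 ≤ E)
    (h1 : E ≤ 1) : twoOutcomePOVM a b E ∈ TwoOutcome d n := by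
  refine ⟨isPOVM_iff.2 ⟨?_, sum_twoOutcomePOVM a b E⟩, a, b, fun j hja hjb => ?_⟩
  · exact add_nonneg (Pi.single_nonneg (α := fun _ => Matrix (Fin d) (Fin d) ℂ) |>.2 h0)
      (Pi.single_nonneg (α := fun _ => Matrix (Fin d) (Fin d) ℂ) |>.2 (sub_nonneg.2 h1))
  · simp [twoOutcomePOVM_apply, hja, hjb]

lemma isProjectivePOVM_twoOutcomePOVM (a b : Fin n) {P : Matrix (Fin d) (Fin d) ℂ}
    (hP : IsStarProjection P) : IsProjectivePOVM (twoOutcomePOVM a b P) := by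
  refine isProjectivePOVM_iff.2 ⟨fun j => ?_, sum_twoOutcomePOVM a b P⟩
  simp only [twoOutcomePOVM_apply, Pi.add_apply, Pi.single_apply]
  split_ifs <;> simp [hP, hP.one_sub, IsStarProjection.zero, IsStarProjection.one]

lemma IsPOVM.le_one {M : Fin n → Matrix (Fin d) (Fin d) ℂ} (hM : IsPOVM M) (i : Fin n) :
    M i ≤ 1 := by
  obtain ⟨h0, hsum⟩ := isPOVM_iff.1 hM
  exact hsum ▸ Finset.single_le_sum (fun j _ => h0 j) (Finset.mem_univ i)

lemma eq_twoOutcomePOVM_of_mem_twoOutcome {N : Fin n → Matrix (Fin d) (Fin d) ℂ}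
    (hN : N ∈ TwoOutcome d n) : ∃ a b, N = twoOutcomePOVM a b (N a) := by
  obtain ⟨⟨-, hsum⟩, a, b, hzero⟩ := hN
  refine ⟨a, b, ?_⟩
  rcases eq_or_ne a b with rfl | hab
  · have ha : N a = 1 := by
      rwa [Finset.sum_eq_single a (fun j _ hj => hzero j hj hj) (by simp)] at hsum
    funext j
    by_cases hj : j = a <;> simp [twoOutcomePOVM_apply, hj, ha, hzero j]
  · have hb : N b = 1 - N a := by
      rw [Finset.sum_eq_add a b hab (fun j _ hj => hzero j hj.1 hj.2) (by simp) (by simp)] at hsum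
      exact eq_sub_of_add_eq' hsum
    funext j
    by_cases hja : j = a
    · simp [twoOutcomePOVM_apply, hja, hab]
    · by_cases hjb : j = b <;> simp [twoOutcomePOVM_apply, hja, hjb, hb, hzero j, hab.symm]

lemma twoOutcome_subset_convexHull_projective :
    TwoOutcome d n ⊆ convexHull ℝ {P : Fin n → Matrix (Fin d) (Fin d) ℂ | IsProjectivePOVM P} := by
  intro N hN
  obtain ⟨a, b, hab⟩ := eq_twoOutcomePOVM_of_mem_twoOutcome hN
  have hE := Matrix.mem_convexHull_isStarProjection
    (Matrix.nonneg_iff_posSemidef.2 (hN.1.1 a)) (hN.1.le_one a)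
  rw [hab]
  refine convexHull_mono ?_ ((twoOutcomePOVM a b).image_convexHull _ ▸ Set.mem_image_of_mem _ hE)
  rintro _ ⟨P, hP, rfl⟩
  exact isProjectivePOVM_twoOutcomePOVM a b hP

lemma sum_smul_twoOutcomePOVM (k : Fin n) {w : Fin n → ℝ} (hw : ∑ i, w i = 1)
    (E : Fin n → Matrix (Fin d) (Fin d) ℂ) :
    ∑ i, w i • twoOutcomePOVM i k (E i) =
      (fun i => w i • E i) + Pi.single k (1 - ∑ i, w i • E i) := by
  have hsingle := map_sum (AddMonoidHom.single (fun _ => Matrix (Fin d) (Fin d) ℂ) k)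
    (fun i => w i • 1 - w i • E i) Finset.univ
  simp only [AddMonoidHom.single_apply] at hsingle
  simp only [twoOutcomePOVM_apply, smul_add, Finset.sum_add_distrib, ← Pi.single_smul,
    Finset.univ_sum_single, smul_sub, ← hsingle, Finset.sum_sub_distrib, ← Finset.sum_smul, hw,
    one_smul]

lemma add_single_one_sub_sum_eq {M F : Fin n → Matrix (Fin d) (Fin d) ℂ} (hM : ∑ i, M i = 1)
    (k : Fin n) (hF : ∀ i ≠ k, F i = M i) : F + Pi.single k (1 - ∑ i, F i) = M := by
  have hdiff : ∑ i, (F i - M i) = F k - M k :=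
    Finset.sum_eq_single k (fun i _ hi => sub_eq_zero.2 (hF i hi)) (by simp)
  funext j
  by_cases hj : j = k
  · subst hj
    rw [Finset.sum_sub_distrib, hM] at hdiff
    calc (F + Pi.single j (1 - ∑ i, F i) : Fin n → Matrix (Fin d) (Fin d) ℂ) j
        = F j - (∑ i, F i - 1) := by rw [Pi.add_apply, Pi.single_eq_same]; abel
      _ = M j := by rw [hdiff]; abel
  · simp [hj, hF j hj]

lemma mem_convexHull_twoOutcome {M : Fin n → Matrix (Fin d) (Fin d) ℂ} (hM : IsPOVM M)
    {lam : Fin n → ℝ} (hlam : ∀ i, 0 ≤ lam i) (hle : ∀ i, M i ≤ lam i • 1) (k : Fin n)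
    (hsum : ∑ i ∈ Finset.univ \ {k}, lam i ≤ 1) : M ∈ convexHull ℝ (TwoOutcome d n) := by
  obtain ⟨hM0, hM1⟩ := isPOVM_iff.1 hM
  set w := Function.update lam k (1 - ∑ i ∈ Finset.univ \ {k}, lam i)
  have hw0 : ∀ i, 0 ≤ w i := by
    intro i
    rcases eq_or_ne i k with rfl | hik
    · simpa [w] using hsum
    · simpa [w, hik] using hlam i
  have hw1 : ∑ i, w i = 1 := by
    simp [w, Finset.sum_update_of_mem (Finset.mem_univ k)]
  -- `(lam i)⁻¹ = 0` when `lam i = 0`; then `M i = 0`, so the identity still holds.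
  have hwE : ∀ i ≠ k, w i • (lam i)⁻¹ • M i = M i := by
    intro i hik
    rw [show w i = lam i from Function.update_of_ne hik _ _]
    rcases eq_or_ne (lam i) 0 with h0 | h0
    · have : M i = 0 := le_antisymm (by simpa [h0] using hle i) (hM0 i)
      simp [this]
    · exact smul_inv_smul₀ h0 (M i)
  have hdecomp : ∑ i, w i • twoOutcomePOVM i k ((lam i)⁻¹ • M i) = M := by
    rw [sum_smul_twoOutcomePOVM k hw1]
    exact add_single_one_sub_sum_eq hM1 k hwE
  rw [← hdecomp]
  refine (convex_convexHull ℝ _).sum_mem (fun i _ => hw0 i) hw1 fun i _ =>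
    subset_convexHull ℝ _ ?_
  exact twoOutcomePOVM_mem_twoOutcome i k (smul_nonneg (inv_nonneg.2 (hlam i)) (hM0 i))
    (Matrix.inv_smul_le_one (hlam i) (hle i))

end POVM

theorem maxEigenvalue_sum_simulable_general {d n : ℕ} (hd : 0 < d)
    (M : Fin n → Matrix (Fin d) (Fin d) ℂ) (hM : IsPOVM M)
    (lam : Fin n → ℝ)
    (hub : ∀ i, (((lam i : ℝ) : ℂ) • (1 : Matrix (Fin d) (Fin d) ℂ) - M i).PosSemidef)
    (k : Fin n) (hsum : ∑ i ∈ Finset.univ \ {k}, lam i ≤ 1) :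
    M ∈ convexHull ℝ (TwoOutcome d n) ∧
      M ∈ convexHull ℝ {P : Fin n → Matrix (Fin d) (Fin d) ℂ | IsProjectivePOVM P} := by
  have : Nonempty (Fin d) := Fin.pos_iff_nonempty.1 hd
  have hle : ∀ i, M i ≤ lam i • 1 := fun i => by
    rw [Matrix.le_iff, ← Complex.coe_smul]
    exact hub i
  have hlam : ∀ i, 0 ≤ lam i := fun i =>
    Matrix.nonneg_of_nonneg_smul_one (((isPOVM_iff.1 hM).1 i).trans (hle i))
  have hTwo := mem_convexHull_twoOutcome hM hlam hle k hsum
  exact ⟨hTwo,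
    convexHull_min twoOutcome_subset_convexHull_projective (convex_convexHull ℝ _) hTwo⟩

/-- Sufficient condition for PM-simulability via maximal eigenvalues: if the sum
of the largest eigenvalues of all effects but one is at most `1`, then the POVM
is a convex combination of two-outcome POVMs, hence PM-simulable. -/
theorem maxEigenvalue_sum_simulable {d n : ℕ} (hd : 0 < d)
    (M : Fin n → Matrix (Fin d) (Fin d) ℂ) (hM : IsPOVM M)
    (lam : Fin n → ℝ)
    (hub : ∀ i, (((lam i : ℝ) : ℂ) • (1 : Matrix (Fin d) (Fin d) ℂ) - M i).PosSemidef)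
    (hmax : ∀ i (μ : ℝ),
      (((μ : ℝ) : ℂ) • (1 : Matrix (Fin d) (Fin d) ℂ) - M i).PosSemidef → lam i ≤ μ)
    (k : Fin n) (hsum : ∑ i ∈ Finset.univ \ {k}, lam i ≤ 1) :
    M ∈ convexHull ℝ (TwoOutcome d n) ∧
      M ∈ convexHull ℝ {P : Fin n → Matrix (Fin d) (Fin d) ℂ | IsProjectivePOVM P} :=
  maxEigenvalue_sum_simulable_general hd M hM lam hub k hsum
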